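/- Let 1 < c < 427/400 be fixed. For S(t) = Σ_{X/2 < p ≤ X} e(t p^c) log p (sum over primes p) and any integer n ≥ 0, one has ∫_{n}^{n+1} |S(t)|² dt ≪ X (log X)³ for all sufficiently large X, with an implied constant depending only on c (uniform in n). -/

import Mathlib

open MeasureTheory

/-- `e(t) = exp(2πit)`. -/
noncomputable def e (t : ℝ) : ℂ := Complex.exp (2 * Real.pi * Complex.I * t)

/-- The primes `p` with `a < p ≤ b`. -/
noncomputable def primesIoc (a b : ℝ) : Finset ℕ :=
  (Finset.range (⌊b⌋₊ + 1)).filter fun p => p.Prime ∧ a < (p : ℝ) ∧ (p : ℝ) ≤ b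

/-- `S(t) = Σ_{X/2 < p ≤ X} e(t p^c) log p`. -/
noncomputable def S (c X t : ℝ) : ℂ :=
  ∑ p ∈ primesIoc (X / 2) X, e (t * (p : ℝ) ^ c) * (Real.log p : ℂ)

/-! Expanding `|S(t)|²` gives a double sum over primes `p, q` of `log p log q e(t (p^c - q^c))`.
Over a unit interval, `∫ e(tα)` is bounded both by `1` and by `1/(π|α|)`, and for `c ≥ 1`
one has `|p^c - q^c| ≥ |p - q|`; so each row of the double sum is at most `(log X)²` times a
harmonic sum `≪ log X`, and there are `≪ X` rows. -/

open Finset Real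

lemma e_add (a b : ℝ) : e (a + b) = e a * e b := by
  rw [e, e, e, ← Complex.exp_add]; push_cast; ring_nf

lemma conj_e (a : ℝ) : (starRingEnd ℂ) (e a) = e (-a) := by
  rw [e, e, ← Complex.exp_conj]; congr 1; simp [Complex.conj_ofNat]

lemma norm_e (a : ℝ) : ‖e a‖ = 1 := by
  rw [e, show 2 * π * Complex.I * (a : ℂ) = ((2 * π * a : ℝ) : ℂ) * Complex.I by push_cast; ring]
  exact Complex.norm_exp_ofReal_mul_I _

@[fun_prop]
lemma continuous_e : Continuous e := by unfold e; fun_prop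

lemma norm_integral_e_mul_le_of_ne_zero (a b : ℝ) {α : ℝ} (hα : α ≠ 0) :
    ‖∫ t in a..b, e (t * α)‖ ≤ 1 / (π * |α|) := by
  have hβ : (2 * π * Complex.I * α : ℂ) ≠ 0 := by simp [Real.pi_ne_zero, hα]
  have he : ∀ t : ℝ, e (t * α) = Complex.exp (2 * π * Complex.I * α * t) := fun t => by
    rw [e]; push_cast; ring_nf
  simp_rw [he, integral_exp_mul_complex hβ, norm_div]
  have hnum : ‖Complex.exp (2 * π * Complex.I * α * b) - Complex.exp (2 * π * Complex.I * α * a)‖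
      ≤ 2 := by
    have h := norm_sub_le (e (b * α)) (e (a * α))
    rwa [norm_e, norm_e, one_add_one_eq_two, he, he] at h
  have hden : ‖(2 * π * Complex.I * α : ℂ)‖ = 2 * (π * |α|) := by
    simp [abs_of_pos Real.pi_pos]; ring
  rw [hden, div_le_div_iff₀ (by positivity) (by positivity)]
  nlinarith [show 0 < π * |α| by positivity]

lemma norm_integral_e_mul_le (a α : ℝ) : ‖∫ t in a..a + 1, e (t * α)‖ ≤ (max 1 |α|)⁻¹ := by
  rcases le_total |α| 1 with hα | hα
  · rw [max_eq_left hα, inv_one]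
    simpa using intervalIntegral.norm_integral_le_of_norm_le_const
      (a := a) (b := a + 1) (C := 1) (f := fun t => e (t * α)) fun t _ => (norm_e _).le
  · have hα0 : α ≠ 0 := by rintro rfl; norm_num at hα
    rw [max_eq_right hα]
    refine (norm_integral_e_mul_le_of_ne_zero a (a + 1) hα0).trans ?_
    rw [one_div]
    gcongr
    exact le_mul_of_one_le_left (abs_nonneg α) (by linarith [Real.pi_gt_three])

lemma norm_sq_sum_e_mul {ι : Type*} (s : Finset ι) (w : ι → ℂ) (ν : ι → ℝ) (t : ℝ) :
    ((‖∑ i ∈ s, e (t * ν i) * w i‖ ^ 2 : ℝ) : ℂ) =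
      ∑ i ∈ s, ∑ j ∈ s, e (t * (ν i - ν j)) * (w i * (starRingEnd ℂ) (w j)) := by
  rw [Complex.ofReal_pow, ← Complex.mul_conj', map_sum, sum_mul_sum]
  refine sum_congr rfl fun i _ => sum_congr rfl fun j _ => ?_
  rw [map_mul, conj_e, mul_sub, sub_eq_add_neg, e_add]
  ring

lemma integral_norm_sq_sum_e_mul_le {ι : Type*} (s : Finset ι) (w : ι → ℂ) (ν : ι → ℝ)
    (a : ℝ) :
    ∫ t in a..a + 1, ‖∑ i ∈ s, e (t * ν i) * w i‖ ^ 2 ≤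
      ∑ i ∈ s, ∑ j ∈ s, ‖w i‖ * ‖w j‖ * (max 1 |ν i - ν j|)⁻¹ := by
  have hint : ∀ α : ℝ, IntervalIntegrable (fun t => e (t * α)) volume a (a + 1) := fun α =>
    (by fun_prop : Continuous fun t => e (t * α)).intervalIntegrable _ _
  calc ∫ t in a..a + 1, ‖∑ i ∈ s, e (t * ν i) * w i‖ ^ 2
      = ‖∫ t in a..a + 1, ((‖∑ i ∈ s, e (t * ν i) * w i‖ ^ 2 : ℝ) : ℂ)‖ := by
        rw [intervalIntegral.integral_ofReal, Complex.norm_real, Real.norm_of_nonneg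
          (intervalIntegral.integral_nonneg (by linarith) fun _ _ => by positivity)]
    _ = ‖∑ i ∈ s, ∑ j ∈ s,
          (∫ t in a..a + 1, e (t * (ν i - ν j))) * (w i * (starRingEnd ℂ) (w j))‖ := by
        simp_rw [norm_sq_sum_e_mul]
        rw [intervalIntegral.integral_finsetSum fun i _ =>
          (continuous_finsetSum _ fun j _ => by fun_prop).intervalIntegrable _ _]
        simp_rw [intervalIntegral.integral_finsetSum fun j _ => (hint _).mul_const _,
          intervalIntegral.integral_mul_const]
    _ ≤ ∑ i ∈ s, ∑ j ∈ s, ‖w i‖ * ‖w j‖ * (max 1 |ν i - ν j|)⁻¹ := by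
        refine (norm_sum_le _ _).trans (sum_le_sum fun i _ => (norm_sum_le _ _).trans
          (sum_le_sum fun j _ => ?_))
        rw [norm_mul, norm_mul, Complex.norm_conj, mul_comm]
        gcongr
        exact norm_integral_e_mul_le a _

lemma inv_max_one_abs_le (x : ℝ) : (max 1 |x|)⁻¹ ≤ 2 * (|x| + 1)⁻¹ :=
  calc (max 1 |x|)⁻¹ ≤ ((|x| + 1) / 2)⁻¹ :=
        inv_anti₀ (by positivity) (by linarith [le_max_left 1 |x|, le_max_right 1 |x|])
    _ = 2 * (|x| + 1)⁻¹ := by rw [inv_div, div_eq_mul_inv]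

lemma sum_inv_max_one_abs_le_of_injOn {t : Finset ℕ} {x : ℕ → ℝ} {g : ℕ → ℕ} {N : ℕ}
    (hg : Set.InjOn g t) (hgN : ∀ q ∈ t, g q < N) (hx : ∀ q ∈ t, |x q| = g q) :
    ∑ q ∈ t, (max 1 |x q|)⁻¹ ≤ 2 * harmonic N := by
  calc ∑ q ∈ t, (max 1 |x q|)⁻¹ ≤ 2 * ∑ d ∈ t.image g, ((d : ℝ) + 1)⁻¹ := by
        rw [sum_image (f := fun d : ℕ => ((d : ℝ) + 1)⁻¹) hg, mul_sum]
        exact sum_le_sum fun q hq => (inv_max_one_abs_le _).trans_eq (by rw [hx q hq])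
    _ ≤ 2 * ∑ d ∈ range N, ((d : ℝ) + 1)⁻¹ := by
        gcongr 2 * ?_
        exact sum_le_sum_of_subset_of_nonneg (by simpa [subset_iff] using hgN)
          fun _ _ _ => by positivity
    _ = 2 * harmonic N := by simp [harmonic]

lemma sum_inv_max_one_abs_sub_le {s : Finset ℕ} {N p : ℕ} (hs : ∀ q ∈ s, q < N) (hp : p < N) :
    ∑ q ∈ s, (max 1 |(p : ℝ) - q|)⁻¹ ≤ 4 * harmonic N := by
  rw [← sum_filter_add_sum_filter_not s (· ≤ p)]
  have hle := sum_inv_max_one_abs_le_of_injOn (t := s.filter (· ≤ p)) (x := fun q => p - q)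
    (g := (p - ·)) (N := N)
    (fun a ha b hb h => by
      simp only [coe_filter, Set.mem_ofPred_eq] at ha hb h; omega)
    (fun q _ => by omega)
    (fun q hq => by
      have hqp : q ≤ p := (mem_filter.mp hq).2
      rw [Nat.cast_sub hqp, abs_of_nonneg (sub_nonneg.mpr (Nat.cast_le.mpr hqp))])
  have hgt := sum_inv_max_one_abs_le_of_injOn (t := s.filter (¬ · ≤ p)) (x := fun q => p - q)
    (g := (· - p)) (N := N)
    (fun a ha b hb h => by
      simp only [coe_filter, Set.mem_ofPred_eq] at ha hb h; omega)
    (fun q hq => by have := hs q (mem_filter.mp hq).1; omega)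
    (fun q hq => by
      have hpq : p ≤ q := (not_le.mp (mem_filter.mp hq).2).le
      rw [Nat.cast_sub hpq, abs_sub_comm,
        abs_of_nonneg (sub_nonneg.mpr (Nat.cast_le.mpr hpq))])
  linarith

lemma cast_harmonic_nonneg (n : ℕ) : (0 : ℝ) ≤ harmonic n := by
  rw [harmonic]; push_cast; positivity

lemma sum_sum_inv_max_one_abs_sub_le {s : Finset ℕ} {N : ℕ} (hs : s ⊆ range N) :
    ∑ p ∈ s, ∑ q ∈ s, (max 1 |(p : ℝ) - q|)⁻¹ ≤ N * (4 * harmonic N) := by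
  have hrow : ∀ p ∈ s, ∑ q ∈ s, (max 1 |(p : ℝ) - q|)⁻¹ ≤ 4 * harmonic N := fun p hp =>
    sum_inv_max_one_abs_sub_le (fun q hq => mem_range.mp (hs hq)) (mem_range.mp (hs hp))
  calc _ ≤ s.card • (4 * (harmonic N : ℝ)) := sum_le_card_nsmul _ _ _ hrow
    _ ≤ N * (4 * harmonic N) := by
        rw [nsmul_eq_mul]
        have := cast_harmonic_nonneg N
        gcongr
        simpa using card_le_card hs

lemma sub_le_rpow_sub_rpow {c x y : ℝ} (hc : 1 ≤ c) (hy : 1 ≤ y) (hyx : y ≤ x) :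
    x - y ≤ x ^ c - y ^ c := by
  have hx : 0 < x := by linarith
  have hmono : y ^ (c - 1) ≤ x ^ (c - 1) := Real.rpow_le_rpow (by linarith) hyx (by linarith)
  have hone : 1 ≤ y ^ (c - 1) := Real.one_le_rpow hy (by linarith)
  have hpow : ∀ z : ℝ, 0 < z → z ^ c = z ^ (c - 1) * z := fun z hz => by
    rw [Real.rpow_sub_one hz.ne', div_mul_cancel₀ _ hz.ne']
  rw [hpow x hx, hpow y (by linarith)]
  nlinarith

lemma abs_sub_le_abs_rpow_sub_rpow {c x y : ℝ} (hc : 1 ≤ c) (hx : 1 ≤ x) (hy : 1 ≤ y) :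
    |x - y| ≤ |x ^ c - y ^ c| := by
  rcases le_total y x with hyx | hxy
  · have := sub_le_rpow_sub_rpow hc hy hyx
    rw [abs_of_nonneg (by linarith), abs_of_nonneg (by linarith)]
    exact this
  · have := sub_le_rpow_sub_rpow hc hx hxy
    rw [abs_of_nonpos (by linarith), abs_of_nonpos (by linarith)]
    linarith

lemma one_le_log_of_three_le {X : ℝ} (hX : 3 ≤ X) : 1 ≤ log X := by
  rw [← log_exp 1]
  exact log_le_log (exp_pos 1) (by linarith [exp_one_lt_three])

lemma harmonic_floor_add_one_le {X : ℝ} (hX : 3 ≤ X) :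
    (harmonic (⌊X⌋₊ + 1) : ℝ) ≤ 3 * log X := by
  have hN : ((⌊X⌋₊ + 1 : ℕ) : ℝ) ≤ X ^ 2 := by
    push_cast; nlinarith [Nat.floor_le (by linarith : 0 ≤ X)]
  have hlogN : log (⌊X⌋₊ + 1 : ℕ) ≤ 2 * log X := by
    calc log (⌊X⌋₊ + 1 : ℕ) ≤ log (X ^ 2) := log_le_log (by positivity) hN
      _ = 2 * log X := by rw [log_pow]; norm_num
  linarith [harmonic_le_one_add_log (⌊X⌋₊ + 1), one_le_log_of_three_le hX]

theorem stmt_5_general (c : ℝ) (hc1 : 1 < c) :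
    ∃ C : ℝ, 0 < C ∧ ∃ X0 : ℝ, ∀ X : ℝ, X0 ≤ X → ∀ n : ℕ,
      (∫ t in (n : ℝ)..((n : ℝ) + 1), ‖S c X t‖ ^ 2) ≤ C * X * Real.log X ^ 3 := by
  refine ⟨24, by norm_num, 3, fun X hX n => ?_⟩
  set P := primesIoc (X / 2) X
  set N := ⌊X⌋₊ + 1
  have hPN : P ⊆ range N := filter_subset _ _
  have hP : ∀ p ∈ P, 1 ≤ (p : ℝ) ∧ ‖(log p : ℂ)‖ ≤ log X := fun p hp => by
    obtain ⟨-, hprime, -, hpX⟩ := mem_filter.mp hp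
    have h1 : (1 : ℝ) ≤ p := by exact_mod_cast hprime.one_lt.le
    rw [Complex.norm_real, norm_of_nonneg (log_nonneg h1)]
    exact ⟨h1, log_le_log (by linarith) hpX⟩
  have hNX : (N : ℝ) ≤ 2 * X := by
    push_cast [N]; linarith [Nat.floor_le (by linarith : 0 ≤ X)]
  have hlogX := one_le_log_of_three_le hX
  calc (∫ t in (n : ℝ)..((n : ℝ) + 1), ‖S c X t‖ ^ 2)
      ≤ ∑ p ∈ P, ∑ q ∈ P,
          ‖(log p : ℂ)‖ * ‖(log q : ℂ)‖ * (max 1 |(p : ℝ) ^ c - (q : ℝ) ^ c|)⁻¹ :=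
        integral_norm_sq_sum_e_mul_le _ _ _ _
    _ ≤ ∑ p ∈ P, ∑ q ∈ P, log X * log X * (max 1 |(p : ℝ) - q|)⁻¹ := by
        refine sum_le_sum fun p hp => sum_le_sum fun q hq => ?_
        gcongr ?_ * ?_ * (max 1 ?_)⁻¹
        · exact (hP p hp).2
        · exact (hP q hq).2
        · exact abs_sub_le_abs_rpow_sub_rpow hc1.le (hP p hp).1 (hP q hq).1
    _ = log X ^ 2 * ∑ p ∈ P, ∑ q ∈ P, (max 1 |(p : ℝ) - q|)⁻¹ := by
        simp_rw [mul_sum]; ring_nf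
    _ ≤ log X ^ 2 * ((2 * X) * (4 * (3 * log X))) := by
        gcongr
        refine (sum_sum_inv_max_one_abs_sub_le hPN).trans ?_
        exact mul_le_mul hNX (by linarith [harmonic_floor_add_one_le hX])
          (by linarith [cast_harmonic_nonneg N]) (by positivity)
    _ = 24 * X * log X ^ 3 := by ring

/-- For fixed `1 < c < 427/400` and every integer `n ≥ 0`,
`∫_{n}^{n+1} |S(t)|² dt ≪ X (log X)³` for all sufficiently large `X`, uniformly in `n`. -/
theorem stmt_5 (c : ℝ) (hc1 : 1 < c) (hc2 : c < 427 / 400) :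
    ∃ C : ℝ, 0 < C ∧ ∃ X0 : ℝ, ∀ X : ℝ, X0 ≤ X → ∀ n : ℕ,
      (∫ t in (n : ℝ)..((n : ℝ) + 1), ‖S c X t‖ ^ 2) ≤ C * X * Real.log X ^ 3 :=
  stmt_5_general c hc1
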